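/- Let G be a finite group of unitaries on a Hilbert space K such that every element of G is of the form λ(2P − I) with λ ∈ {±1, ±i} and P an orthogonal projection, and let A = G′ be the commutant. Then for any T ∈ B(K), ‖T − Φ(T)‖ ≤ 2 · sup_{P ∈ LatA} ‖P^⊥ T P‖, where Φ(T) = |G|⁻¹ Σ_{G∈G} G T G* is the averaging expectation onto A, provided each projection P arising from G ∈ G lies in Lat A. -/

import Mathlib

/-!
Write `g ∈ G` as `λ(2P − 1)`. Since `g` is unitary and `|λ| = 1`,
`‖T − gTg*‖ = ‖Tg − gT‖ = 2‖TP − PT‖`, and `TP − PT = P^⊥TP − PTP^⊥` is a difference of two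
corners that map `ran P → ran P^⊥` and `ran P^⊥ → ran P` respectively; by Pythagoras its norm
is at most the larger of `‖P^⊥TP‖` and `‖PTP^⊥‖`. The latter is again a corner of the form
`Q^⊥TQ` with `Q = P^⊥ ∈ Lat G′`, because `G′` is closed under adjoints. Averaging the bound
`‖T − gTg*‖ ≤ 2 sup ‖Q^⊥TQ‖` over `G` gives the theorem.
-/

variable {K : Type*} [NormedAddCommGroup K] [InnerProductSpace ℂ K] [CompleteSpace K]

/-- The commutant `G′` of a group of unitaries on `K`. -/
def commutant (G : Subgroup (unitary (K →L[ℂ] K))) : Set (K →L[ℂ] K) :=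
  {T | ∀ g : G, T * ((g : unitary (K →L[ℂ] K)) : K →L[ℂ] K) =
      ((g : unitary (K →L[ℂ] K)) : K →L[ℂ] K) * T}

/-- `Lat G′`: the orthogonal projections `P` with `P^⊥ A P = 0` for all `A ∈ G′`. -/
def latProj (G : Subgroup (unitary (K →L[ℂ] K))) : Set (K →L[ℂ] K) :=
  {P | IsSelfAdjoint P ∧ IsIdempotentElem P ∧
    ∀ T ∈ commutant G, (1 - P) * T * P = 0}

open ContinuousLinearMap

namespace IsStarProjection

variable {𝕜 E : Type*} [RCLike 𝕜] [NormedAddCommGroup E] [InnerProductSpace 𝕜 E] [CompleteSpace E]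
  {P : E →L[𝕜] E}

theorem inner_apply_one_sub_apply (hP : IsStarProjection P) (x y : E) :
    inner 𝕜 (P x) ((1 - P) y) = 0 :=
  calc inner 𝕜 (P x) ((1 - P) y) = inner 𝕜 x (P ((1 - P) y)) := hP.isSelfAdjoint.isSymmetric _ _
    _ = 0 := by rw [← mul_apply_eq_comp, hP.mul_one_sub_self, zero_apply, inner_zero_right]

theorem norm_sq_eq_norm_apply_sq_add (hP : IsStarProjection P) (x : E) :
    ‖x‖ ^ 2 = ‖P x‖ ^ 2 + ‖(1 - P) x‖ ^ 2 := by
  have h := norm_add_sq_eq_norm_sq_add_norm_sq_of_inner_eq_zero _ _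
    (hP.inner_apply_one_sub_apply x x)
  simpa [sq] using h

theorem norm_one_sub_apply_sub_apply_sq (hP : IsStarProjection P) (x y : E) :
    ‖(1 - P) x - P y‖ ^ 2 = ‖(1 - P) x‖ ^ 2 + ‖P y‖ ^ 2 := by
  rw [@norm_sub_sq 𝕜, inner_eq_zero_symm.mp (hP.inner_apply_one_sub_apply y x)]
  simp

theorem norm_mul_sub_mul_le (hP : IsStarProjection P) (T : E →L[𝕜] E) :
    ‖T * P - P * T‖ ≤ max ‖(1 - P) * T * P‖ ‖P * T * (1 - P)‖ := by
  set M := max ‖(1 - P) * T * P‖ ‖P * T * (1 - P)‖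
  have hM : 0 ≤ M := le_max_of_le_left (norm_nonneg _)
  refine opNorm_le_bound _ hM fun x => ?_
  have hx : (T * P - P * T) x = (1 - P) (T (P x)) - P (T ((1 - P) x)) := by
    simp only [sub_apply, mul_apply_eq_comp, map_sub]
    abel
  have hA : ‖(1 - P) (T (P x))‖ ≤ M * ‖P x‖ :=
    calc ‖(1 - P) (T (P x))‖ = ‖((1 - P) * T * P) (P x)‖ := by
          rw [mul_apply_eq_comp, ← mul_apply_eq_comp P, hP.isIdempotentElem.eq, mul_apply_eq_comp]
      _ ≤ ‖(1 - P) * T * P‖ * ‖P x‖ := le_opNorm _ _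
      _ ≤ M * ‖P x‖ := by gcongr; exact le_max_left _ _
  have hB : ‖P (T ((1 - P) x))‖ ≤ M * ‖(1 - P) x‖ :=
    calc ‖P (T ((1 - P) x))‖ = ‖(P * T * (1 - P)) ((1 - P) x)‖ := by
          rw [mul_apply_eq_comp, ← mul_apply_eq_comp (1 - P), hP.one_sub.isIdempotentElem.eq,
            mul_apply_eq_comp]
      _ ≤ ‖P * T * (1 - P)‖ * ‖(1 - P) x‖ := le_opNorm _ _
      _ ≤ M * ‖(1 - P) x‖ := by gcongr; exact le_max_right _ _
  refine le_of_pow_le_pow_left₀ two_ne_zero (by positivity) ?_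
  rw [hx, hP.norm_one_sub_apply_sub_apply_sq, mul_pow, hP.norm_sq_eq_norm_apply_sq_add x]
  nlinarith [pow_le_pow_left₀ (norm_nonneg _) hA 2, pow_le_pow_left₀ (norm_nonneg _) hB 2]

end IsStarProjection

section CStarRing

variable {A : Type*} [NormedRing A] [StarRing A] [CStarRing A]

theorem IsStarProjection.norm_one_sub_mul_mul_le {P : A} (hP : IsStarProjection P) (T : A) :
    ‖(1 - P) * T * P‖ ≤ ‖T‖ :=
  calc ‖(1 - P) * T * P‖ ≤ ‖1 - P‖ * ‖T‖ * ‖P‖ := norm_mul₃_le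
    _ ≤ 1 * ‖T‖ * 1 := by
        gcongr
        exacts [hP.one_sub.norm_le, hP.norm_le]
    _ = ‖T‖ := by ring

theorem norm_sub_mul_mul_star_unitary (u : unitary A) (T : A) :
    ‖T - u * T * star (u : A)‖ = ‖T * u - u * T‖ :=
  calc ‖T - u * T * star (u : A)‖ = ‖(T * u - u * T) * (star u : unitary A)‖ := by
        rw [Unitary.coe_star, sub_mul, mul_assoc T, Unitary.mul_star_self_of_mem u.2, mul_one]
    _ = ‖T * u - u * T‖ := CStarRing.norm_mul_coe_unitary _ _

end CStarRing

theorem norm_mul_smul_reflection_sub {𝕜 A : Type*} [RCLike 𝕜] [NormedRing A] [NormedAlgebra 𝕜 A]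
    (c : 𝕜) (P T : A) :
    ‖T * (c • (2 • P - 1)) - c • (2 • P - 1) * T‖ = 2 * ‖c‖ * ‖T * P - P * T‖ := by
  have h : T * (c • (2 • P - 1)) - c • (2 • P - 1) * T = (2 * c) • (T * P - P * T) := by
    rw [mul_smul_comm, smul_mul_assoc, ← smul_sub, mul_comm, mul_smul]
    congr 1
    rw [two_smul, two_smul]
    noncomm_ring
  rw [h, norm_smul, norm_mul, RCLike.norm_two]

theorem norm_sub_inv_card_smul_sum_le {𝕜 E ι : Type*} [RCLike 𝕜] [NormedAddCommGroup E]
    [NormedSpace 𝕜 E] [Fintype ι] [Nonempty ι] {x : E} {f : ι → E} {c : ℝ}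
    (h : ∀ i, ‖x - f i‖ ≤ c) :
    ‖x - (Fintype.card ι : 𝕜)⁻¹ • ∑ i, f i‖ ≤ c := by
  have hn : (Fintype.card ι : 𝕜) ≠ 0 := Nat.cast_ne_zero.2 Fintype.card_ne_zero
  have hsum : x - (Fintype.card ι : 𝕜)⁻¹ • ∑ i, f i =
      (Fintype.card ι : 𝕜)⁻¹ • ∑ i, (x - f i) := by
    rw [Finset.sum_sub_distrib, smul_sub, Finset.sum_const, Finset.card_univ,
      ← Nat.cast_smul_eq_nsmul 𝕜, smul_smul, inv_mul_cancel₀ hn, one_smul]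
  rw [hsum, norm_smul, norm_inv, RCLike.norm_natCast]
  calc (Fintype.card ι : ℝ)⁻¹ * ‖∑ i, (x - f i)‖
      ≤ (Fintype.card ι : ℝ)⁻¹ * ∑ _i : ι, c := by
        gcongr
        exact (norm_sum_le _ _).trans (Finset.sum_le_sum fun i _ => h i)
    _ = c := by
        rw [Finset.sum_const, Finset.card_univ, nsmul_eq_mul, inv_mul_cancel_left₀ (by positivity)]

variable {G : Subgroup (unitary (K →L[ℂ] K))}

theorem star_mem_commutant {T : K →L[ℂ] K} (hT : T ∈ commutant G) : star T ∈ commutant G := by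
  intro g
  have h := congrArg star (hT g⁻¹)
  simpa [← Unitary.star_eq_inv, Unitary.coe_star] using h.symm

theorem isStarProjection_of_mem_latProj {P : K →L[ℂ] K} (hP : P ∈ latProj G) :
    IsStarProjection P :=
  ⟨hP.2.1, hP.1⟩

theorem one_sub_mem_latProj {P : K →L[ℂ] K} (hP : P ∈ latProj G) : 1 - P ∈ latProj G := by
  have hP' := (isStarProjection_of_mem_latProj hP).one_sub
  refine ⟨hP'.isSelfAdjoint, hP'.isIdempotentElem, fun T hT => ?_⟩
  have h := congrArg star (hP.2.2 _ (star_mem_commutant hT))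
  rw [sub_sub_cancel]
  rwa [star_mul, star_mul, star_star, star_zero, hP.1.star_eq,
    hP'.isSelfAdjoint.star_eq, ← mul_assoc] at h

theorem norm_le_iSup_latProj (T : K →L[ℂ] K) (P : latProj G) :
    ‖(1 - (P : K →L[ℂ] K)) * T * P‖ ≤
      ⨆ Q : latProj G, ‖(1 - (Q : K →L[ℂ] K)) * T * (Q : K →L[ℂ] K)‖ := by
  refine le_ciSup (f := fun Q : latProj G => ‖(1 - (Q : K →L[ℂ] K)) * T * Q‖) ⟨‖T‖, ?_⟩ P
  rintro _ ⟨Q, rfl⟩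
  exact (isStarProjection_of_mem_latProj Q.2).norm_one_sub_mul_mul_le T

/-- If every element of a finite group `G` of unitaries has the form
`λ(2P − I)` with `λ ∈ {±1, ±i}` and `P` a projection lying in `Lat G′`, then
for every `T`, `‖T − Φ(T)‖ ≤ 2 sup_{P ∈ Lat G′} ‖P^⊥ T P‖`, where `Φ` is the
averaging expectation onto the commutant. -/
theorem norm_sub_average_le (G : Subgroup (unitary (K →L[ℂ] K))) [Fintype G]
    (hG : ∀ g : G, ∃ (lam : ℂ) (P : K →L[ℂ] K),
      (lam = 1 ∨ lam = -1 ∨ lam = Complex.I ∨ lam = -Complex.I) ∧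
      IsSelfAdjoint P ∧ IsIdempotentElem P ∧
      ((g : unitary (K →L[ℂ] K)) : K →L[ℂ] K) = lam • (2 • P - 1) ∧
      P ∈ latProj G) :
    ∀ T : K →L[ℂ] K,
      ‖T - (Fintype.card G : ℂ)⁻¹ •
          ∑ g : G, ((g : unitary (K →L[ℂ] K)) : K →L[ℂ] K) * T *
            star ((g : unitary (K →L[ℂ] K)) : K →L[ℂ] K)‖ ≤
        2 * ⨆ P : latProj G, ‖(1 - (P : K →L[ℂ] K)) * T * (P : K →L[ℂ] K)‖ := by
  intro T
  refine norm_sub_inv_card_smul_sum_le fun g => ?_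
  obtain ⟨lam, P, hlam, -, -, hg, hP⟩ := hG g
  have hlam_norm : ‖lam‖ = 1 := by rcases hlam with rfl | rfl | rfl | rfl <;> simp
  have hcompl := norm_le_iSup_latProj T ⟨1 - P, one_sub_mem_latProj hP⟩
  rw [sub_sub_cancel] at hcompl
  calc ‖T - g * T * star ((g : unitary (K →L[ℂ] K)) : K →L[ℂ] K)‖
      = 2 * ‖T * P - P * T‖ := by
        rw [norm_sub_mul_mul_star_unitary, hg, norm_mul_smul_reflection_sub, hlam_norm, mul_one]
    _ ≤ 2 * max ‖(1 - P) * T * P‖ ‖P * T * (1 - P)‖ := by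
        gcongr
        exact (isStarProjection_of_mem_latProj hP).norm_mul_sub_mul_le T
    _ ≤ 2 * ⨆ Q : latProj G, ‖(1 - (Q : K →L[ℂ] K)) * T * (Q : K →L[ℂ] K)‖ := by
        gcongr
        exact max_le (norm_le_iSup_latProj T ⟨P, hP⟩) hcompl
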